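/- arXiv:2501.05522 — 4 statements merged into one kernel-verified Lean document; each statement's English description precedes it below -/
import Mathlib

section
/- Every function φ in V₂^β(ℝ) is (has a representative that is) uniformly continuous, bounded, and vanishes at infinity. -/
open MeasureTheory Real Filter Topology
open scoped FourierTransform

/-!
The weight makes `φhat` integrable: by AM-GM, `‖φhat‖ ≤ 1/(2w) + w‖φhat‖²/2` with
`w = 1 + Ψ^{2β}`, and `2β ≥ 1` gives `1/(2w) ≤ 1/(1 + Ψ)`. Fourier inversion then exhibits `φ`
a.e. as a rescaled Fourier transform of an `L¹` function, which is continuous, bounded by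
`‖φhat‖₁`, and vanishes at infinity by Riemann–Lebesgue; uniform continuity follows.
-/

lemma one_add_le_two_mul_one_add_rpow {t r : ℝ} (ht : 0 ≤ t) (hr : 1 ≤ r) :
    1 + t ≤ 2 * (1 + t ^ r) := by
  have htr : 0 ≤ t ^ r := rpow_nonneg ht r
  rcases le_or_gt t 1 with h | h
  · linarith
  · have : t ≤ t ^ r := by simpa using rpow_le_rpow_of_exponent_le h.le hr
    linarith

lemma le_one_div_two_mul_add_mul_sq_div_two {w : ℝ} (hw : 0 < w) (n : ℝ) :
    n ≤ 1 / (2 * w) + w * n ^ 2 / 2 := by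
  have key : n - w * n ^ 2 / 2 ≤ 1 / (2 * w) := by
    rw [le_div_iff₀ (by positivity)]
    nlinarith [sq_nonneg (w * n - 1)]
  linarith

theorem integrable_of_integrable_one_add_rpow_mul_norm_sq {α E : Type*} [MeasurableSpace α]
    {μ : Measure α} [NormedAddCommGroup E] {Ψ : α → ℝ} {f : α → E} {r : ℝ}
    (hΨ : ∀ p, 0 ≤ Ψ p) (hr : 1 ≤ r) (hint : Integrable (fun p => 1 / (1 + Ψ p)) μ)
    (hf : AEStronglyMeasurable f μ) (hweight : Integrable (fun p => (1 + Ψ p ^ r) * ‖f p‖ ^ 2) μ) :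
    Integrable f μ := by
  refine (hint.add (hweight.const_mul (1 / 2))).mono' hf (Eventually.of_forall fun p => ?_)
  have hw : 0 < 1 + Ψ p ^ r := by linarith [rpow_nonneg (hΨ p) r]
  have hinv : 1 / (2 * (1 + Ψ p ^ r)) ≤ 1 / (1 + Ψ p) :=
    one_div_le_one_div_of_le (by linarith [hΨ p]) (one_add_le_two_mul_one_add_rpow (hΨ p) hr)
  have := le_one_div_two_mul_add_mul_sq_div_two hw ‖f p‖
  simp only [Pi.add_apply]
  linarith

lemma integral_exp_neg_mul_mul_eq_fourier (f : ℝ → ℂ) (x : ℝ) :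
    ∫ p : ℝ, Complex.exp (-(Complex.I * p * x)) * f p = 𝓕 f (x / (2 * π)) := by
  rw [Real.fourier_eq']
  refine integral_congr_ae (Eventually.of_forall fun p => ?_)
  have hphase : -2 * π * (inner ℝ p (x / (2 * π)) : ℝ) = -(p * x) := by
    rw [RCLike.inner_apply', conj_trivial]
    field_simp [pi_ne_zero]
  simp only [smul_eq_mul, hphase]
  push_cast
  ring_nf

lemma continuous_fourier_comp_div {f : ℝ → ℂ} (hf : Integrable f) (a : ℝ) :
    Continuous fun x => 𝓕 f (x / a) :=
  (VectorFourier.fourierIntegral_continuous Real.continuous_fourierChar continuous_inner hf).comp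
    (continuous_id.div_const a)

lemma tendsto_fourier_comp_div_cocompact (f : ℝ → ℂ) {a : ℝ} (ha : a ≠ 0) :
    Tendsto (fun x => 𝓕 f (x / a)) (cocompact ℝ) (𝓝 0) := by
  have hdiv : Tendsto (fun x : ℝ => x / a) (cocompact ℝ) (cocompact ℝ) := by
    simp only [div_eq_mul_inv]
    exact (Homeomorph.mulRight₀ a⁻¹ (inv_ne_zero ha)).toCocompactMap.cocompact_tendsto'
  exact (Real.zero_at_infty_fourier f).comp hdiv

theorem stmt2_general (Ψ : ℝ → ℝ) (hnonneg : ∀ p, 0 ≤ Ψ p)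
    (hint : Integrable (fun p => 1 / (1 + Ψ p)))
    (β : ℝ) (hβ : 1 / 2 ≤ β)
    (φ : ℝ → ℂ)
    (φhat : ℝ → ℂ) (hφhat : Measurable φhat)
    (hweight : Integrable (fun p => (1 + Ψ p ^ (2 * β)) * ‖φhat p‖ ^ 2))
    (hinv : ∀ᵐ x : ℝ, φ x =
      (1 / (2 * π) : ℂ) * ∫ p : ℝ, Complex.exp (-(Complex.I * p * x)) * φhat p) :
    ∃ g : ℝ → ℂ, (∀ᵐ x : ℝ, g x = φ x) ∧ UniformContinuous g ∧
      (∃ C : ℝ, ∀ x, ‖g x‖ ≤ C) ∧ Tendsto g (cocompact ℝ) (𝓝 0) := by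
  have hφhat_int : Integrable φhat :=
    integrable_of_integrable_one_add_rpow_mul_norm_sq hnonneg (by linarith) hint
      hφhat.aestronglyMeasurable hweight
  set g : ℝ → ℂ := fun x => (1 / (2 * π) : ℂ) * 𝓕 φhat (x / (2 * π))
  have hcont : Continuous g := continuous_const.mul (continuous_fourier_comp_div hφhat_int _)
  have htend : Tendsto g (cocompact ℝ) (𝓝 0) := by
    simpa only [mul_zero] using
      (tendsto_fourier_comp_div_cocompact φhat (a := 2 * π) (by positivity)).const_mul
        (1 / (2 * π) : ℂ)
  refine ⟨g, ?_, hcont.uniformContinuous_of_tendsto_cocompact htend,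
    ⟨‖(1 / (2 * π) : ℂ)‖ * ∫ p, ‖φhat p‖, fun x => ?_⟩, htend⟩
  · filter_upwards [hinv] with x hx
    rw [hx, integral_exp_neg_mul_mul_eq_fourier]
  · rw [norm_mul]
    gcongr
    exact VectorFourier.norm_fourierIntegral_le_integral_norm _ _ _ _ _

/-- Every `φ ∈ V₂^β(ℝ)` (an `L²` function whose Fourier transform `φhat` satisfies
`∫ (1+Ψ^{2β})|φhat|² < ∞`, recovered a.e. by Fourier inversion) has a representative
that is uniformly continuous, bounded, and vanishes at infinity. -/
theorem stmt2 (Ψ : ℝ → ℝ) (hmeas : Measurable Ψ) (hnonneg : ∀ p, 0 ≤ Ψ p)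
    (hint : Integrable (fun p => 1 / (1 + Ψ p)))
    (β : ℝ) (hβ : 1 / 2 ≤ β)
    (φ : ℝ → ℂ) (hφ : MemLp φ 2 (volume : Measure ℝ))
    (φhat : ℝ → ℂ) (hφhat : Measurable φhat)
    (hweight : Integrable (fun p => (1 + Ψ p ^ (2 * β)) * ‖φhat p‖ ^ 2))
    (hinv : ∀ᵐ x : ℝ, φ x =
      (1 / (2 * π) : ℂ) * ∫ p : ℝ, Complex.exp (-(Complex.I * p * x)) * φhat p) :
    ∃ g : ℝ → ℂ, (∀ᵐ x : ℝ, g x = φ x) ∧ UniformContinuous g ∧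
      (∃ C : ℝ, ∀ x, ‖g x‖ ≤ C) ∧ Tendsto g (cocompact ℝ) (𝓝 0) :=
  stmt2_general Ψ hnonneg hint β hβ φ φhat hφhat hweight hinv
end

section
/- The operator 𝒜_μ defined on 𝒟(𝒜_μ) = {φ + C ψ_ν(·-a) : φ ∈ V₂¹(ℝ), φ(a) = 0, C ∈ ℝ} by 𝒜_μ(φ + C ψ_ν(·-a)) = 𝒜φ + ν C ψ_ν(·-a) acts on the Fourier side by (𝒜_μ u)^(p) = -Ψ(p) û(p) + μ u(a) e^{ipa}. -/
open MeasureTheory Real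

/-!
Since `φ(a) = 0`, Fourier inversion gives `u(a) = C/(2π) ∫ 1/(Ψ+ν) = C/μ` by the choice of `ν`,
so `μ u(a) e^{ipa} = C e^{ipa}`. The claim is then the identity
`-Ψ C e^{ipa}/(Ψ+ν) + C e^{ipa} = ν C e^{ipa}/(Ψ+ν)`.
-/

section Integrability

variable {α : Type*} [MeasurableSpace α] {m : Measure α} {f : α → ℝ}

theorem aemeasurable_of_integrable_one_div_one_add (hf : ∀ x, 0 ≤ f x)
    (hint : Integrable (fun x => 1 / (1 + f x)) m) : AEMeasurable f m := by
  refine (hint.aemeasurable.inv.sub_const 1).congr (Filter.Eventually.of_forall fun x => ?_)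
  have : 1 + f x ≠ 0 := by linarith [hf x]
  simp [one_div, inv_inv]

/-- `1/(f+ν) ≤ max 1 ν⁻¹ · 1/(1+f)` for `f ≥ 0`. -/
theorem integrable_one_div_add_of_integrable_one_div_one_add (hf : ∀ x, 0 ≤ f x)
    (hint : Integrable (fun x => 1 / (1 + f x)) m) {ν : ℝ} (hν : 0 < ν) :
    Integrable (fun x => 1 / (f x + ν)) m := by
  have hmeas : AEStronglyMeasurable (fun x => 1 / (f x + ν)) m :=
    (((aemeasurable_of_integrable_one_div_one_add hf hint).add_const ν).const_div 1)
      |>.aestronglyMeasurable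
  refine (hint.const_mul (max 1 ν⁻¹)).mono' hmeas (Filter.Eventually.of_forall fun x => ?_)
  have hfν : 0 < f x + ν := by linarith [hf x]
  have h1f : 0 < 1 + f x := by linarith [hf x]
  have hfle : f x ≤ max 1 ν⁻¹ * f x := le_mul_of_one_le_left (hf x) (le_max_left _ _)
  have hνle : 1 ≤ max 1 ν⁻¹ * ν := by
    calc (1 : ℝ) = ν⁻¹ * ν := (inv_mul_cancel₀ hν.ne').symm
      _ ≤ max 1 ν⁻¹ * ν := by gcongr; exact le_max_right _ _
  rw [Real.norm_eq_abs, abs_of_pos (one_div_pos.mpr hfν), mul_one_div,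
    div_le_div_iff₀ hfν h1f]
  linarith

end Integrability

theorem integral_exp_neg_mul_mul_add {φ : ℝ → ℂ} {g : ℝ → ℝ} (hφ : Integrable φ)
    (hg : Integrable g) (a : ℝ) (C : ℂ) :
    ∫ p : ℝ, Complex.exp (-(Complex.I * p * a)) * (φ p + C * Complex.exp (Complex.I * p * a) * g p)
      = (∫ p : ℝ, Complex.exp (-(Complex.I * p * a)) * φ p) + C * ((∫ p, g p : ℝ) : ℂ) := by
  have hφ' : Integrable (fun p : ℝ => Complex.exp (-(Complex.I * p * a)) * φ p) := by
    refine hφ.bdd_mul (c := 1) (by fun_prop) (Filter.Eventually.of_forall fun p => ?_)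
    simp [Complex.norm_exp, Complex.mul_re]
  calc _ = ∫ p : ℝ, (Complex.exp (-(Complex.I * p * a)) * φ p + C * g p) := by
        refine integral_congr_ae (Filter.Eventually.of_forall fun p => ?_)
        have : Complex.exp (-(Complex.I * p * a)) * Complex.exp (Complex.I * p * a) = 1 := by
          rw [← Complex.exp_add, neg_add_cancel, Complex.exp_zero]
        linear_combination C * g p * this
    _ = _ := by
        have hg' : Integrable (fun p => (g p : ℂ)) := hg.ofReal
        rw [integral_add hφ' (hg'.const_mul C), integral_const_mul, integral_complex_ofReal]

theorem stmt11_general (Ψ : ℝ → ℝ)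
    (hnonneg : ∀ p, 0 ≤ Ψ p)
    (hint : Integrable (fun p => 1 / (1 + Ψ p)))
    (μ ν : ℝ) (hν : 0 < ν)
    (hμν : μ / (2 * π) * ∫ p, 1 / (Ψ p + ν) = 1)
    (a : ℝ) (C : ℂ)
    (φhat : ℝ → ℂ)
    (hφint : Integrable φhat)
    (hφa : (1 / (2 * π) : ℂ) * ∫ p : ℝ, Complex.exp (-(Complex.I * p * a)) * φhat p = 0)
    (uhat : ℝ → ℂ)
    (huhat : ∀ p, uhat p = φhat p + C * Complex.exp (Complex.I * p * a) / ((Ψ p : ℂ) + ν))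
    (ua : ℂ)
    (hua : ua = (1 / (2 * π) : ℂ) * ∫ p : ℝ, Complex.exp (-(Complex.I * p * a)) * uhat p) :
    ∀ p : ℝ, -(Ψ p : ℂ) * φhat p + ν * C * Complex.exp (Complex.I * p * a) / ((Ψ p : ℂ) + ν)
      = -(Ψ p : ℂ) * uhat p + μ * ua * Complex.exp (Complex.I * p * a) := by
  have hΨν : ∀ p, (Ψ p : ℂ) + ν ≠ 0 := fun p => by
    exact_mod_cast (show Ψ p + ν ≠ 0 by linarith [hnonneg p])
  have huhat' : ∀ p, uhat p = φhat p + C * Complex.exp (Complex.I * p * a) *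
      ((1 / (Ψ p + ν) : ℝ) : ℂ) := fun p => by
    rw [huhat p]; push_cast; ring
  have hμua : (μ : ℂ) * ua = C := by
    simp_rw [hua, huhat']
    rw [integral_exp_neg_mul_mul_add hφint
      (integrable_one_div_add_of_integrable_one_div_one_add hnonneg hint hν), mul_add, hφa,
      zero_add]
    have hμν' : (μ : ℂ) / (2 * π) * ((∫ p, 1 / (Ψ p + ν) : ℝ) : ℂ) = 1 := by exact_mod_cast hμν
    linear_combination C * hμν'
  intro p
  rw [huhat p, mul_assoc (μ : ℂ), ← mul_assoc (μ : ℂ), hμua]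
  field_simp [hΨν p]
  ring

/-- Fourier-side action of `𝒜_μ`: for `u = φ + C ψ_ν(·-a)` with `φ ∈ V₂¹(ℝ)`, `φ(a) = 0`,
the operator `𝒜_μ u = 𝒜φ + ν C ψ_ν(·-a)` satisfies
`(𝒜_μ u)^(p) = -Ψ(p) û(p) + μ u(a) e^{ipa}`, where `u(a)` is the value at `a` of the
continuous representative, obtained by Fourier inversion. -/
theorem stmt11 (Ψ : ℝ → ℝ) (hcont : Continuous Ψ) (heven : ∀ p, Ψ (-p) = Ψ p)
    (hnonneg : ∀ p, 0 ≤ Ψ p)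
    (hint : Integrable (fun p => 1 / (1 + Ψ p)))
    (μ ν : ℝ) (hμ : 0 < μ) (hν : 0 < ν)
    (hμν : μ / (2 * π) * ∫ p, 1 / (Ψ p + ν) = 1)
    (a : ℝ) (C : ℂ)
    (φhat : ℝ → ℂ) (hφhat : Measurable φhat)
    (hφint : Integrable φhat)
    (hweight : Integrable (fun p => (1 + Ψ p ^ 2) * ‖φhat p‖ ^ 2))
    (hφa : (1 / (2 * π) : ℂ) * ∫ p : ℝ, Complex.exp (-(Complex.I * p * a)) * φhat p = 0)
    (uhat : ℝ → ℂ)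
    (huhat : ∀ p, uhat p = φhat p + C * Complex.exp (Complex.I * p * a) / ((Ψ p : ℂ) + ν))
    (ua : ℂ)
    (hua : ua = (1 / (2 * π) : ℂ) * ∫ p : ℝ, Complex.exp (-(Complex.I * p * a)) * uhat p) :
    ∀ p : ℝ, -(Ψ p : ℂ) * φhat p + ν * C * Complex.exp (Complex.I * p * a) / ((Ψ p : ℂ) + ν)
      = -(Ψ p : ℂ) * uhat p + μ * ua * Complex.exp (Complex.I * p * a) :=
  stmt11_general Ψ hnonneg hint μ ν hν hμν a C φhat hφint hφa uhat huhat ua hua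
end

section
/- The operator 𝒜_μ is symmetric: for all u, v ∈ 𝒟(𝒜_μ), (𝒜_μ u, v)_{L²} = (u, 𝒜_μ v)_{L²}. -/
/-!
With `e(p) = e^{ipa}`, the two integrands differ pointwise by `C₁ e conj φ₂ - conj C₂ conj e φ₁`:
the terms carrying `Ψ` cancel because `Ψ + ν` is real. The weighted `L²` bound together with
`1/(1+Ψ) ∈ L¹` puts `φᵢ` in `L¹`, so this defect is integrable, and its integral vanishes by the
conditions `φᵢ(a) = 0`. Integrability of the integrands themselves is never needed.
-/

open MeasureTheory Real ComplexConjugate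

-- If `g` is not integrable, neither is `g + h`, and both integrals are the junk value `0`.
theorem integral_add_eq_of_integral_eq_zero {α G : Type*} [MeasurableSpace α] {μ : Measure α}
    [NormedAddCommGroup G] [NormedSpace ℝ G] {g h : α → G} (hh : Integrable h μ)
    (h0 : ∫ x, h x ∂μ = 0) : ∫ x, g x + h x ∂μ = ∫ x, g x ∂μ := by
  by_cases hg : Integrable g μ
  · rw [integral_add hg hh, h0, add_zero]
  · rw [integral_undef hg, integral_undef ((integrable_add_iff_integrable_left' hh).not.mpr hg)]

theorem le_one_div_one_add_add_one_add_sq_mul_sq {t : ℝ} (ht : 0 ≤ t) (x : ℝ) :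
    x ≤ 1 / (1 + t) + (1 + t ^ 2) * x ^ 2 := by
  rw [div_add' _ _ _ (by positivity), le_div_iff₀ (by positivity)]
  nlinarith [sq_nonneg ((1 + t) * x - 1), sq_nonneg x, sq_nonneg (t * x),
    mul_nonneg ht (sq_nonneg (t * x)), mul_nonneg ht (sq_nonneg x)]

theorem MeasureTheory.Integrable.of_integrable_weighted_sq {α E : Type*} [MeasurableSpace α]
    {μ : Measure α} [NormedAddCommGroup E] {w : α → ℝ} {f : α → E} (hw : ∀ x, 0 ≤ w x)
    (hint : Integrable (fun x => 1 / (1 + w x)) μ) (hf : AEStronglyMeasurable f μ)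
    (hf2 : Integrable (fun x => (1 + w x ^ 2) * ‖f x‖ ^ 2) μ) : Integrable f μ :=
  (hint.add hf2).mono' hf <| ae_of_all _ fun x => le_one_div_one_add_add_one_add_sq_mul_sq (hw x) _

theorem MeasureTheory.Integrable.cexp_neg_mul {f : ℝ → ℂ} (hf : Integrable f) (a : ℝ) :
    Integrable (fun p : ℝ => Complex.exp (-(Complex.I * p * a)) * f p) :=
  hf.bdd_mul (c := 1) (by fun_prop) <| ae_of_all _ fun p => by simp [Complex.norm_exp]

theorem conj_cexp_I_mul (p a : ℝ) :
    conj (Complex.exp (Complex.I * p * a)) = Complex.exp (-(Complex.I * p * a)) := by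
  rw [← Complex.exp_conj]
  simp

theorem mul_conj_eq_mul_conj_add (t ν : ℝ) (hD : (t : ℂ) + ν ≠ 0) (z w c₁ c₂ e : ℂ) :
    (-(t : ℂ) * z + ν * c₁ * e / (t + ν)) * conj (w + c₂ * e / (t + ν)) =
      (z + c₁ * e / (t + ν)) * conj (-(t : ℂ) * w + ν * c₂ * e / (t + ν)) +
        (c₁ * conj (conj e * w) - conj c₂ * (conj e * z)) := by
  simp only [map_add, map_mul, map_div₀, map_neg, Complex.conj_ofReal, Complex.conj_conj]
  field_simp
  ring

theorem stmt12_general (Ψ : ℝ → ℝ)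
    (hnonneg : ∀ p, 0 ≤ Ψ p)
    (hint : Integrable (fun p => 1 / (1 + Ψ p)))
    (ν : ℝ) (hν : 0 < ν)
    (a : ℝ) (C₁ C₂ : ℂ)
    (φ₁ φ₂ : ℝ → ℂ) (hφ₁ : Measurable φ₁) (hφ₂ : Measurable φ₂)
    (hw₁ : Integrable (fun p => (1 + Ψ p ^ 2) * ‖φ₁ p‖ ^ 2))
    (hw₂ : Integrable (fun p => (1 + Ψ p ^ 2) * ‖φ₂ p‖ ^ 2))
    (ha₁ : (∫ p : ℝ, Complex.exp (-(Complex.I * p * a)) * φ₁ p) = 0)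
    (ha₂ : (∫ p : ℝ, Complex.exp (-(Complex.I * p * a)) * φ₂ p) = 0) :
    ∫ p : ℝ,
        (-(Ψ p : ℂ) * φ₁ p + ν * C₁ * Complex.exp (Complex.I * p * a) / ((Ψ p : ℂ) + ν)) *
          (starRingEnd ℂ)
            (φ₂ p + C₂ * Complex.exp (Complex.I * p * a) / ((Ψ p : ℂ) + ν))
      = ∫ p : ℝ,
        (φ₁ p + C₁ * Complex.exp (Complex.I * p * a) / ((Ψ p : ℂ) + ν)) *
          (starRingEnd ℂ)
            (-(Ψ p : ℂ) * φ₂ p + ν * C₂ * Complex.exp (Complex.I * p * a) / ((Ψ p : ℂ) + ν)) := by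
  set g₁ := fun p : ℝ => Complex.exp (-(Complex.I * p * a)) * φ₁ p
  set g₂ := fun p : ℝ => Complex.exp (-(Complex.I * p * a)) * φ₂ p
  have hg₁ : Integrable g₁ :=
    (hint.of_integrable_weighted_sq hnonneg hφ₁.aestronglyMeasurable hw₁).cexp_neg_mul a
  have hg₂ : Integrable g₂ :=
    (hint.of_integrable_weighted_sq hnonneg hφ₂.aestronglyMeasurable hw₂).cexp_neg_mul a
  have hg₂_conj : Integrable fun p => conj (g₂ p) :=
    Complex.conjCLE.toContinuousLinearMap.integrable_comp hg₂
  have hdefect_int : Integrable fun p => C₁ * conj (g₂ p) - conj C₂ * g₁ p :=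
    (hg₂_conj.const_mul C₁).sub (hg₁.const_mul _)
  have hdefect : ∫ p, C₁ * conj (g₂ p) - conj C₂ * g₁ p = 0 := by
    rw [integral_sub (hg₂_conj.const_mul C₁) (hg₁.const_mul _), integral_const_mul,
      integral_const_mul, integral_conj, ha₁, ha₂, map_zero, mul_zero, mul_zero, sub_zero]
  refine (integral_congr_ae <| ae_of_all _ fun p => ?_).trans
    (integral_add_eq_of_integral_eq_zero hdefect_int hdefect)
  have hD : (Ψ p : ℂ) + ν ≠ 0 := by exact_mod_cast (by linarith [hnonneg p] : Ψ p + ν ≠ 0)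
  rw [mul_conj_eq_mul_conj_add _ _ hD, conj_cexp_I_mul]

/-- Symmetry of `𝒜_μ`: for `u = φ₁ + C₁ ψ_ν(·-a)` and `v = φ₂ + C₂ ψ_ν(·-a)` in
`𝒟(𝒜_μ)` (so `φᵢ ∈ V₂¹(ℝ)` with `φᵢ(a) = 0`), one has `(𝒜_μ u, v) = (u, 𝒜_μ v)` in
`L²(ℝ)`; via Plancherel this is the Fourier-side identity stated below, where
`(𝒜_μ u)^(p) = -Ψ(p) φ̂₁(p) + ν C₁ e^{ipa}/(Ψ(p)+ν)` and
`û(p) = φ̂₁(p) + C₁ e^{ipa}/(Ψ(p)+ν)`, and similarly for `v`. -/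
theorem stmt12 (Ψ : ℝ → ℝ) (hcont : Continuous Ψ) (heven : ∀ p, Ψ (-p) = Ψ p)
    (hnonneg : ∀ p, 0 ≤ Ψ p)
    (hint : Integrable (fun p => 1 / (1 + Ψ p)))
    (μ ν : ℝ) (hμ : 0 < μ) (hν : 0 < ν)
    (hμν : μ / (2 * π) * ∫ p, 1 / (Ψ p + ν) = 1)
    (a : ℝ) (C₁ C₂ : ℂ)
    (φ₁ φ₂ : ℝ → ℂ) (hφ₁ : Measurable φ₁) (hφ₂ : Measurable φ₂)
    (hw₁ : Integrable (fun p => (1 + Ψ p ^ 2) * ‖φ₁ p‖ ^ 2))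
    (hw₂ : Integrable (fun p => (1 + Ψ p ^ 2) * ‖φ₂ p‖ ^ 2))
    (ha₁ : (∫ p : ℝ, Complex.exp (-(Complex.I * p * a)) * φ₁ p) = 0)
    (ha₂ : (∫ p : ℝ, Complex.exp (-(Complex.I * p * a)) * φ₂ p) = 0) :
    ∫ p : ℝ,
        (-(Ψ p : ℂ) * φ₁ p + ν * C₁ * Complex.exp (Complex.I * p * a) / ((Ψ p : ℂ) + ν)) *
          (starRingEnd ℂ)
            (φ₂ p + C₂ * Complex.exp (Complex.I * p * a) / ((Ψ p : ℂ) + ν))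
      = ∫ p : ℝ,
        (φ₁ p + C₁ * Complex.exp (Complex.I * p * a) / ((Ψ p : ℂ) + ν)) *
          (starRingEnd ℂ)
            (-(Ψ p : ℂ) * φ₂ p + ν * C₂ * Complex.exp (Complex.I * p * a) / ((Ψ p : ℂ) + ν)) :=
  stmt12_general Ψ hnonneg hint ν hν a C₁ C₂ φ₁ φ₂ hφ₁ hφ₂ hw₁ hw₂ ha₁ ha₂
end

section
/- The quadratic form a_μ[u,u] = ‖(-𝒜)^{1/2} u‖₂² - μ |u(a)|², defined for u ∈ V₂^{1/2}(ℝ), is semi-bounded from below: a_μ[u,u] ≥ -ν ‖u‖₂² for all u ∈ V₂^{1/2}(ℝ), where ν is the unique positive number with (μ/2π) ∫ dp/(Ψ(p)+ν) = 1. -/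
/-!
Since `|e^{-ipa}| = 1`, `|u(a)| ≤ (1/2π) ∫ |û|`, and Cauchy–Schwarz against the weight `Ψ + ν`
gives `(∫ |û|)² ≤ ∫ dp/(Ψ + ν) · ∫ (Ψ + ν)|û|² = (2π/μ) ∫ (Ψ + ν)|û|²`. Hence
`μ |u(a)|² ≤ ‖(-𝒜)^{1/2}u‖₂² + ν ‖u‖₂²`.
-/

open MeasureTheory Real

section WeightedCauchySchwarz

variable {α : Type*} [MeasurableSpace α] {m : Measure α}

theorem sq_integral_mul_le_integral_sq_mul_integral_sq {f g : α → ℝ}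
    (hf₀ : 0 ≤ᵐ[m] f) (hg₀ : 0 ≤ᵐ[m] g) (hf : MemLp f 2 m) (hg : MemLp g 2 m) :
    (∫ x, f x * g x ∂m) ^ 2 ≤ (∫ x, f x ^ 2 ∂m) * ∫ x, g x ^ 2 ∂m := by
  have hofReal : ENNReal.ofReal 2 = 2 := by norm_num
  have holder := integral_mul_le_Lp_mul_Lq_of_nonneg Real.HolderConjugate.two_two hf₀ hg₀
    (hofReal ▸ hf) (hofReal ▸ hg)
  simp only [Real.rpow_two, ← Real.sqrt_eq_rpow] at holder
  have hfg₀ : 0 ≤ ∫ x, f x * g x ∂m :=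
    integral_nonneg_of_ae (by filter_upwards [hf₀, hg₀] with x hfx hgx using mul_nonneg hfx hgx)
  calc (∫ x, f x * g x ∂m) ^ 2
      ≤ (√(∫ x, f x ^ 2 ∂m) * √(∫ x, g x ^ 2 ∂m)) ^ 2 := pow_le_pow_left₀ hfg₀ holder 2
    _ = (∫ x, f x ^ 2 ∂m) * ∫ x, g x ^ 2 ∂m := by
      rw [mul_pow, sq_sqrt (integral_nonneg fun x => sq_nonneg (f x)),
        sq_sqrt (integral_nonneg fun x => sq_nonneg (g x))]

theorem sq_integral_norm_le_integral_inv_mul_integral_mul_sq {E : Type*} [NormedAddCommGroup E]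
    {u : α → E} {w : α → ℝ} (hw : ∀ x, 0 < w x) (hwm : AEMeasurable w m)
    (hu : AEStronglyMeasurable u m) (hinv : Integrable (fun x => (w x)⁻¹) m)
    (hwu : Integrable (fun x => w x * ‖u x‖ ^ 2) m) :
    (∫ x, ‖u x‖ ∂m) ^ 2 ≤ (∫ x, (w x)⁻¹ ∂m) * ∫ x, w x * ‖u x‖ ^ 2 ∂m := by
  have hsq_inv : ∀ x, √(w x)⁻¹ ^ 2 = (w x)⁻¹ := fun x => sq_sqrt (inv_nonneg.2 (hw x).le)
  have hsq_mul : ∀ x, (√(w x) * ‖u x‖) ^ 2 = w x * ‖u x‖ ^ 2 := fun x => by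
    rw [mul_pow, sq_sqrt (hw x).le]
  have hsplit : ∀ x, √(w x)⁻¹ * (√(w x) * ‖u x‖) = ‖u x‖ := fun x => by
    rw [sqrt_inv, ← mul_assoc, inv_mul_cancel₀ (sqrt_ne_zero'.2 (hw x)), one_mul]
  have hf : MemLp (fun x => √(w x)⁻¹) 2 m :=
    (memLp_two_iff_integrable_sq (f := fun x => √(w x)⁻¹)
      hwm.inv.sqrt.aestronglyMeasurable).2 <| by simpa only [hsq_inv] using hinv
  have hg : MemLp (fun x => √(w x) * ‖u x‖) 2 m :=
    (memLp_two_iff_integrable_sq (f := fun x => √(w x) * ‖u x‖)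
      (hwm.sqrt.aestronglyMeasurable.mul hu.norm)).2 <| by simpa only [hsq_mul] using hwu
  simpa only [hsplit, hsq_inv, hsq_mul] using
    sq_integral_mul_le_integral_sq_mul_integral_sq (.of_forall fun x => sqrt_nonneg _)
      (.of_forall fun x => by positivity) hf hg

theorem integrable_of_integrable_one_add_mul {w g : α → ℝ} (hw : ∀ x, 0 ≤ w x)
    (hg : ∀ x, 0 ≤ g x) (hgm : AEStronglyMeasurable g m)
    (h : Integrable (fun x => (1 + w x) * g x) m) : Integrable g m :=
  h.mono' hgm <| .of_forall fun x => by
    rw [norm_of_nonneg (hg x)]; nlinarith [mul_nonneg (hw x) (hg x)]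

theorem integrable_mul_of_integrable_one_add_mul {w g : α → ℝ} (hw : ∀ x, 0 ≤ w x)
    (hg : ∀ x, 0 ≤ g x) (hwm : AEStronglyMeasurable w m) (hgm : AEStronglyMeasurable g m)
    (h : Integrable (fun x => (1 + w x) * g x) m) : Integrable (fun x => w x * g x) m :=
  h.mono' (hwm.mul hgm) <| .of_forall fun x => by
    rw [norm_of_nonneg (mul_nonneg (hw x) (hg x))]; nlinarith [hg x]

theorem integrable_inv_add_of_integrable_inv_one_add {w : α → ℝ} {ν : ℝ} (hν : 0 < ν)
    (hw : ∀ x, 0 ≤ w x) (hwm : AEMeasurable w m)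
    (h : Integrable (fun x => (1 + w x)⁻¹) m) : Integrable (fun x => (w x + ν)⁻¹) m := by
  refine (h.const_mul (max 1 ν⁻¹)).mono' (hwm.add_const ν).inv.aestronglyMeasurable <|
    .of_forall fun x => ?_
  have hpos : 0 < w x + ν := by linarith [hw x]
  have hdom : 1 + w x ≤ max 1 ν⁻¹ * (w x + ν) := by
    have h1 : w x ≤ max 1 ν⁻¹ * w x := le_mul_of_one_le_left (hw x) (le_max_left _ _)
    have h2 : 1 ≤ max 1 ν⁻¹ * ν := by
      calc (1 : ℝ) = ν⁻¹ * ν := (inv_mul_cancel₀ hν.ne').symm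
        _ ≤ max 1 ν⁻¹ * ν := mul_le_mul_of_nonneg_right (le_max_right _ _) hν.le
    linarith
  rw [norm_of_nonneg (inv_nonneg.2 hpos.le), ← div_eq_mul_inv, inv_eq_one_div,
    div_le_div_iff₀ hpos (by linarith [hw x])]
  linarith

end WeightedCauchySchwarz

theorem norm_integral_exp_mul_le_integral_norm {m : Measure ℝ} (u : ℝ → ℂ) (a : ℝ) :
    ‖∫ p, Complex.exp (-(Complex.I * p * a)) * u p ∂m‖ ≤ ∫ p, ‖u p‖ ∂m := by
  refine (norm_integral_le_integral_norm _).trans_eq (integral_congr_ae (.of_forall fun p => ?_))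
  have : ‖Complex.exp (-(Complex.I * p * a))‖ = 1 := by
    rw [Complex.norm_exp]; simp
  simp only [norm_mul, this, one_mul]

theorem sq_norm_integral_exp_mul_le {m : Measure ℝ} {u : ℝ → ℂ} {w : ℝ → ℝ}
    (hw : ∀ p, 0 < w p) (hwm : AEMeasurable w m) (hu : AEStronglyMeasurable u m)
    (hinv : Integrable (fun p => (w p)⁻¹) m) (hwu : Integrable (fun p => w p * ‖u p‖ ^ 2) m)
    (a : ℝ) :
    ‖∫ p, Complex.exp (-(Complex.I * p * a)) * u p ∂m‖ ^ 2 ≤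
      (∫ p, (w p)⁻¹ ∂m) * ∫ p, w p * ‖u p‖ ^ 2 ∂m :=
  (pow_le_pow_left₀ (norm_nonneg _) (norm_integral_exp_mul_le_integral_norm u a) 2).trans
    (sq_integral_norm_le_integral_inv_mul_integral_mul_sq hw hwm hu hinv hwu)

theorem stmt13_general (Ψ : ℝ → ℝ) (hcont : Continuous Ψ)
    (hnonneg : ∀ p, 0 ≤ Ψ p)
    (hint : Integrable (fun p => 1 / (1 + Ψ p)))
    (μ ν : ℝ) (hμ : 0 < μ) (hν : 0 < ν)
    (hμν : μ / (2 * π) * ∫ p, 1 / (Ψ p + ν) = 1)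
    (a : ℝ)
    (uhat : ℝ → ℂ) (huhat : Measurable uhat)
    (hweight : Integrable (fun p => (1 + Ψ p) * ‖uhat p‖ ^ 2)) :
    (1 / (2 * π)) * (∫ p, Ψ p * ‖uhat p‖ ^ 2)
        - μ * ‖(1 / (2 * π) : ℂ) * ∫ p : ℝ, Complex.exp (-(Complex.I * p * a)) * uhat p‖ ^ 2
      ≥ -ν * ((1 / (2 * π)) * ∫ p, ‖uhat p‖ ^ 2) := by
  simp only [one_div] at hint hμν ⊢
  have hsq : Integrable (fun p => ‖uhat p‖ ^ 2) :=
    integrable_of_integrable_one_add_mul hnonneg (fun p => by positivity)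
      (huhat.norm.pow_const 2).aestronglyMeasurable hweight
  have hΨsq : Integrable (fun p => Ψ p * ‖uhat p‖ ^ 2) :=
    integrable_mul_of_integrable_one_add_mul hnonneg (fun p => by positivity)
      hcont.aestronglyMeasurable (huhat.norm.pow_const 2).aestronglyMeasurable hweight
  have hsplit : ∫ p, (Ψ p + ν) * ‖uhat p‖ ^ 2 =
      (∫ p, Ψ p * ‖uhat p‖ ^ 2) + ν * ∫ p, ‖uhat p‖ ^ 2 := by
    rw [← integral_const_mul, ← integral_add hΨsq (hsq.const_mul ν)]
    simp only [add_mul]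
  have hbound := sq_norm_integral_exp_mul_le (fun p => by linarith [hnonneg p])
    (hcont.measurable.aemeasurable.add_const ν) huhat.aestronglyMeasurable
    (integrable_inv_add_of_integrable_inv_one_add hν hnonneg hcont.measurable.aemeasurable hint)
    ((hΨsq.add (hsq.const_mul ν)).congr (.of_forall fun p => by simp only [Pi.add_apply]; ring))
    a
  have hC : μ * ∫ p, (Ψ p + ν)⁻¹ = 2 * π := by
    rwa [div_mul_eq_mul_div, div_eq_one_iff_eq (by positivity)] at hμν
  have hnorm : ‖(2 * (π : ℂ))⁻¹‖ = (2 * π)⁻¹ := by simp [abs_of_pos pi_pos]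
  have h2π : 2 * π * (2 * π)⁻¹ = 1 := mul_inv_cancel₀ (by positivity)
  rw [norm_mul, mul_pow, hnorm]
  linear_combination (μ * (2 * π)⁻¹ ^ 2) * hbound
    + (2 * π)⁻¹ ^ 2 * (∫ p, (Ψ p + ν) * ‖uhat p‖ ^ 2) * hC
    + (2 * π)⁻¹ * (∫ p, (Ψ p + ν) * ‖uhat p‖ ^ 2) * h2π + (2 * π)⁻¹ * hsplit

/-- Semi-boundedness from below of the form
`a_μ[u,u] = ‖(-𝒜)^{1/2}u‖₂² - μ|u(a)|²` on `V₂^{1/2}(ℝ)`: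
`a_μ[u,u] ≥ -ν ‖u‖₂²`, stated on the Fourier side where
`‖(-𝒜)^{1/2}u‖₂² = (1/2π)∫ Ψ|û|²`, `‖u‖₂² = (1/2π)∫ |û|²` and
`u(a) = (1/2π)∫ e^{-ipa} û(p) dp`, and `ν > 0` is determined by
`(μ/2π)∫ dp/(Ψ(p)+ν) = 1`. -/
theorem stmt13 (Ψ : ℝ → ℝ) (hcont : Continuous Ψ) (heven : ∀ p, Ψ (-p) = Ψ p)
    (hnonneg : ∀ p, 0 ≤ Ψ p)
    (hint : Integrable (fun p => 1 / (1 + Ψ p)))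
    (μ ν : ℝ) (hμ : 0 < μ) (hν : 0 < ν)
    (hμν : μ / (2 * π) * ∫ p, 1 / (Ψ p + ν) = 1)
    (a : ℝ)
    (uhat : ℝ → ℂ) (huhat : Measurable uhat)
    (hweight : Integrable (fun p => (1 + Ψ p) * ‖uhat p‖ ^ 2)) :
    (1 / (2 * π)) * (∫ p, Ψ p * ‖uhat p‖ ^ 2)
        - μ * ‖(1 / (2 * π) : ℂ) * ∫ p : ℝ, Complex.exp (-(Complex.I * p * a)) * uhat p‖ ^ 2
      ≥ -ν * ((1 / (2 * π)) * ∫ p, ‖uhat p‖ ^ 2) :=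
  stmt13_general Ψ hcont hnonneg hint μ ν hμ hν hμν a uhat huhat hweight
end
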